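/- arXiv:1604.03162 — 2 statements merged into one kernel-verified Lean document; each statement's English description precedes it below -/
import Mathlib

section
/- Let Γ = Γ(G;(G_i)_{i∈I}) with I = {0,...,r−1} be a coset geometry that is a thin, residually connected incidence geometry on which G acts flag-transitively by right multiplication with only the identity fixing a chamber, and suppose that every residue of Γ of type {i, j} with |i − j| > 1 is a generalized digon (string diagram). For each i, let ρ_i be the generator of the minimal parabolic subgroup ∩_{j∈I, j≠i} G_j (which is cyclic of order 2). Then (G, {ρ_0,...,ρ_{r−1}}) is a string C-group: the ρ_i are involutions generating G, they satisfy the intersection property, and (ρ_i ρ_j)^2 = 1 whenever |i − j| > 1. -/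
open Pointwise

/-- An incidence system `(X, *, t, I)`. -/
structure IncidenceSystem (X : Type*) (I : Type*) where
  inc : X → X → Prop
  typ : X → I
  inc_refl : ∀ x, inc x x
  inc_symm : ∀ x y, inc x y → inc y x
  eq_of_inc_of_typ_eq : ∀ x y, inc x y → typ x = typ y → x = y

namespace IncidenceSystem

variable {X : Type*} {I : Type*} (Γ : IncidenceSystem X I)

/-- A flag is a set of pairwise incident elements. -/
def IsFlag (F : Set X) : Prop := ∀ x ∈ F, ∀ y ∈ F, Γ.inc x y

/-- A chamber is a flag of type `I`. -/
def IsChamber (C : Set X) : Prop := Γ.IsFlag C ∧ Γ.typ '' C = Set.univ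

/-- An incidence geometry: every flag is contained in a chamber. -/
def IsGeometry : Prop := ∀ F : Set X, Γ.IsFlag F → ∃ C : Set X, Γ.IsChamber C ∧ F ⊆ C

/-- The set of elements of the residue of a flag `F`: elements outside `F`
incident to every element of `F`. -/
def res (F : Set X) : Set X := {x : X | x ∉ F ∧ ∀ f ∈ F, Γ.inc x f}

/-- The incidence graph induced on a subset `S` is connected. -/
def ConnectedOn (S : Set X) : Prop :=
  S.Nonempty ∧ ∀ x ∈ S, ∀ y ∈ S,
    Relation.ReflTransGen (fun a b : X => a ∈ S ∧ b ∈ S ∧ a ≠ b ∧ Γ.inc a b) x y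

/-- Residual connectedness: the incidence graph of every residue of rank at
least two (including `Γ` itself, the residue of the empty flag) is connected. -/
def ResiduallyConnected : Prop :=
  ∀ F : Set X, Γ.IsFlag F →
    (∃ i j : I, i ≠ j ∧ i ∉ Γ.typ '' F ∧ j ∉ Γ.typ '' F) →
    Γ.ConnectedOn (Γ.res F)

/-- Thinness: every residue of rank one contains exactly two elements. -/
def Thin : Prop :=
  ∀ F : Set X, Γ.IsFlag F → (∃! i : I, i ∉ Γ.typ '' F) →
    ∃ x y : X, x ≠ y ∧ Γ.res F = {x, y}

/-- Firmness: every residue of rank one contains at least two elements. -/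
def Firm : Prop :=
  ∀ F : Set X, Γ.IsFlag F → (∃! i : I, i ∉ Γ.typ '' F) →
    ∃ x y : X, x ≠ y ∧ x ∈ Γ.res F ∧ y ∈ Γ.res F

/-- Two chambers are `i`-adjacent if they differ exactly in their elements of type `i`. -/
def Adjacent (C C' : Set X) (i : I) : Prop :=
  Γ.IsChamber C ∧ Γ.IsChamber C' ∧ C ≠ C' ∧
    {x ∈ C | Γ.typ x ≠ i} = {x ∈ C' | Γ.typ x ≠ i}

/-- Chamber-connectedness of the residue of the flag `F`: any two chambers
containing `F` are linked by a sequence of successively adjacent chambers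
containing `F`. -/
def ChamberConnectedFrom (F : Set X) : Prop :=
  ∀ C C' : Set X, Γ.IsChamber C → Γ.IsChamber C' → F ⊆ C → F ⊆ C' →
    Relation.ReflTransGen
      (fun A B : Set X => F ⊆ A ∧ F ⊆ B ∧ ∃ i : I, Γ.Adjacent A B i) C C'

/-- Strong chamber-connectedness: every residue of rank at least two
(including `Γ` itself) is chamber-connected. -/
def StronglyChamberConnected : Prop :=
  ∀ F : Set X, Γ.IsFlag F →
    (∃ i j : I, i ≠ j ∧ i ∉ Γ.typ '' F ∧ j ∉ Γ.typ '' F) →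
    Γ.ChamberConnectedFrom F

/-- A type-preserving automorphism. -/
def IsAut (φ : Equiv.Perm X) : Prop :=
  (∀ x, Γ.typ (φ x) = Γ.typ x) ∧ ∀ x y, (Γ.inc (φ x) (φ y) ↔ Γ.inc x y)

/-- The group `Aut_I(Γ)` of type-preserving automorphisms. -/
def autGroup : Subgroup (Equiv.Perm X) where
  carrier := {φ : Equiv.Perm X | Γ.IsAut φ}
  one_mem' := ⟨fun _ => rfl, fun _ _ => Iff.rfl⟩
  mul_mem' := by
    rintro φ ψ ⟨ht, hi⟩ ⟨ht', hi'⟩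
    exact ⟨fun x => by rw [Equiv.Perm.mul_apply, ht, ht'],
      fun x y => by rw [Equiv.Perm.mul_apply, Equiv.Perm.mul_apply, hi, hi']⟩
  inv_mem' := by
    rintro φ ⟨ht, hi⟩
    refine ⟨fun x => ?_, fun x y => ?_⟩
    · conv_rhs => rw [← (Equiv.Perm.eq_inv_iff_eq (f := φ) (x := φ⁻¹ x) (y := x)).mp rfl]
      rw [ht]
    · conv_rhs => rw [← (Equiv.Perm.eq_inv_iff_eq (f := φ) (x := φ⁻¹ x) (y := x)).mp rfl, ← (Equiv.Perm.eq_inv_iff_eq (f := φ) (x := φ⁻¹ y) (y := y)).mp rfl]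
      exact (hi _ _).symm

/-- Two chambers are in the same orbit under `Aut_I(Γ)`. -/
def InSameOrbit (C C' : Set X) : Prop := ∃ φ ∈ Γ.autGroup, ⇑φ '' C = C'

/-- Flag-transitivity: `Aut_I(Γ)` is transitive on the flags of each type. -/
def FlagTransitive : Prop :=
  ∀ F F' : Set X, Γ.IsFlag F → Γ.IsFlag F' → Γ.typ '' F = Γ.typ '' F' →
    ∃ φ ∈ Γ.autGroup, ⇑φ '' F = F'

/-- Chamber-transitivity: `Aut_I(Γ)` is transitive on chambers. -/
def ChamberTransitive : Prop :=
  ∀ C C' : Set X, Γ.IsChamber C → Γ.IsChamber C' → ∃ φ ∈ Γ.autGroup, ⇑φ '' C = C'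

/-- Chirality: `Aut_I(Γ)` has exactly two orbits on chambers, and adjacent
chambers lie in distinct orbits. -/
def Chiral : Prop :=
  (∃ C₁ C₂ : Set X, Γ.IsChamber C₁ ∧ Γ.IsChamber C₂ ∧ ¬ Γ.InSameOrbit C₁ C₂ ∧
    ∀ C : Set X, Γ.IsChamber C → Γ.InSameOrbit C C₁ ∨ Γ.InSameOrbit C C₂) ∧
  ∀ (C C' : Set X) (i : I), Γ.Adjacent C C' i → ¬ Γ.InSameOrbit C C'

/-- The `J`-truncation of `Γ`. -/
def truncation (J : Set I) : IncidenceSystem {x : X // Γ.typ x ∈ J} J where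
  inc p q := Γ.inc p.1 q.1
  typ p := ⟨Γ.typ p.1, p.2⟩
  inc_refl p := Γ.inc_refl p.1
  inc_symm p q h := Γ.inc_symm _ _ h
  eq_of_inc_of_typ_eq p q h ht :=
    Subtype.ext (Γ.eq_of_inc_of_typ_eq _ _ h (congrArg Subtype.val ht))

end IncidenceSystem

section CosetGeometry

variable {G : Type*} [Group G] {ι : Type*}

/-- The right coset `H g`. -/
def rcoset (H : Subgroup G) (g : G) : Set G := {x : G | x * g⁻¹ ∈ H}

lemma mem_rcoset_self (H : Subgroup G) (g : G) : g ∈ rcoset H g := by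
  show g * g⁻¹ ∈ H
  simp only [mul_inv_cancel]
  exact H.one_mem

lemma rcoset_eq_of_mem {H : Subgroup G} {g x : G} (hx : x ∈ rcoset H g) :
    rcoset H x = rcoset H g := by
  ext y
  simp only [rcoset, Set.mem_setOf_eq] at *
  constructor
  · intro hy
    have h2 := H.mul_mem hy hx
    have h3 : y * x⁻¹ * (x * g⁻¹) = y * g⁻¹ := by group
    rwa [h3] at h2
  · intro hy
    have h2 := H.mul_mem hy (H.inv_mem hx)
    have h3 : y * g⁻¹ * (x * g⁻¹)⁻¹ = y * x⁻¹ := by group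
    rwa [h3] at h2

/-- Elements of the coset geometry `Γ(G; (G_i))`: pairs consisting of a type
`i` and a right coset of `G_i`. -/
def CosetElt (Gi : ι → Subgroup G) : Type _ :=
  { p : ι × Set G // ∃ g : G, p.2 = rcoset (Gi p.1) g }

/-- The coset incidence system `Γ(G; (G_i))` of Tits. -/
def cosetGeometry (Gi : ι → Subgroup G) : IncidenceSystem (CosetElt Gi) ι where
  inc p q := (p.1.2 ∩ q.1.2).Nonempty
  typ p := p.1.1
  inc_refl := by
    rintro ⟨⟨i, S⟩, g, hg⟩
    dsimp at hg ⊢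
    subst hg
    exact ⟨g, mem_rcoset_self _ g, mem_rcoset_self _ g⟩
  inc_symm := by
    rintro p q ⟨x, hx1, hx2⟩
    exact ⟨x, hx2, hx1⟩
  eq_of_inc_of_typ_eq := by
    rintro ⟨⟨i, S⟩, hS⟩ ⟨⟨j, T⟩, hT⟩ hinc hij
    obtain ⟨x, hx1, hx2⟩ := hinc
    dsimp at hij hx1 hx2 hS hT
    subst hij
    obtain ⟨g, rfl⟩ := hS
    obtain ⟨h, rfl⟩ := hT
    apply Subtype.ext
    dsimp only
    rw [Prod.mk.injEq]
    exact ⟨rfl, by rw [← rcoset_eq_of_mem hx1, rcoset_eq_of_mem hx2]⟩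

lemma rcoset_image_mul (H : Subgroup G) (g a : G) :
    (fun x : G => x * a) '' rcoset H g = rcoset H (g * a) := by
  ext y
  simp only [rcoset, Set.mem_image, Set.mem_setOf_eq, mul_inv_rev]
  constructor
  · rintro ⟨x, hx, rfl⟩
    have h3 : x * a * (a⁻¹ * g⁻¹) = x * g⁻¹ := by group
    rwa [h3]
  · intro hy
    refine ⟨y * a⁻¹, ?_, by group⟩
    have h3 : y * a⁻¹ * g⁻¹ = y * (a⁻¹ * g⁻¹) := by group
    rwa [h3]

/-- Right multiplication by `a` on the coset geometry. -/
def rmul (Gi : ι → Subgroup G) (a : G) (p : CosetElt Gi) : CosetElt Gi :=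
  ⟨(p.1.1, (fun x : G => x * a) '' p.1.2), by
    obtain ⟨g, hg⟩ := p.2
    exact ⟨g * a, by rw [hg, rcoset_image_mul]⟩⟩

/-- `G` acts flag-transitively on the coset geometry by right multiplication. -/
def GFlagTransitive (Gi : ι → Subgroup G) : Prop :=
  ∀ F F' : Set (CosetElt Gi), (cosetGeometry Gi).IsFlag F → (cosetGeometry Gi).IsFlag F' →
    (cosetGeometry Gi).typ '' F = (cosetGeometry Gi).typ '' F' →
    ∃ a : G, rmul Gi a '' F = F'

/-- Only the identity of `G` fixes a chamber of the coset geometry. -/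
def GFree (Gi : ι → Subgroup G) : Prop :=
  ∀ (a : G) (C : Set (CosetElt Gi)), (cosetGeometry Gi).IsChamber C →
    rmul Gi a '' C = C → a = 1

end CosetGeometry

/-- `(G, ρ)` is a C-group: the `ρ i` are involutions generating `G` and
satisfying the intersection property. -/
def IsCGroup {G : Type*} [Group G] {r : ℕ} (ρ : Fin r → G) : Prop :=
  (∀ i, ρ i ≠ 1 ∧ ρ i * ρ i = 1) ∧
  Subgroup.closure (Set.range ρ) = ⊤ ∧
  ∀ K J : Set (Fin r),
    Subgroup.closure (ρ '' K) ⊓ Subgroup.closure (ρ '' J) =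
      Subgroup.closure (ρ '' (K ∩ J))

/-- The parabolic subgroup `G⁺_K = ⟨α_i⁻¹ α_j : i, j ∈ K⟩` of a `C⁺`-group. -/
def GplusSub {G : Type*} [Group G] {r : ℕ} (α : Fin r → G) (K : Set (Fin r)) : Subgroup G :=
  Subgroup.closure {g : G | ∃ i ∈ K, ∃ j ∈ K, g = (α i)⁻¹ * α j}
namespace HT

variable {G : Type*} [Group G] {r : ℕ} (Gi : Fin r → Subgroup G)

/-- The base element of type `i`: the coset `Gi i · 1`. -/
def xe (i : Fin r) : CosetElt Gi := ⟨(i, rcoset (Gi i) 1), ⟨1, rfl⟩⟩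

lemma typ_xe (i : Fin r) : (cosetGeometry Gi).typ (xe Gi i) = i := rfl

lemma typ_rmul (a : G) (p : CosetElt Gi) :
    (cosetGeometry Gi).typ (rmul Gi a p) = (cosetGeometry Gi).typ p := rfl

lemma rmul_one (p : CosetElt Gi) : rmul Gi 1 p = p := by
  apply Subtype.ext
  dsimp [rmul]
  simp

lemma rmul_mul (a b : G) (p : CosetElt Gi) :
    rmul Gi (a * b) p = rmul Gi b (rmul Gi a p) := by
  apply Subtype.ext
  dsimp [rmul]
  rw [Prod.mk.injEq]
  refine ⟨rfl, ?_⟩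
  rw [Set.image_image]
  apply Set.image_congr
  intro x _
  rw [mul_assoc]

lemma rmul_cancel (a : G) (p : CosetElt Gi) : rmul Gi a⁻¹ (rmul Gi a p) = p := by
  rw [← rmul_mul, mul_inv_cancel, rmul_one]

lemma inc_rmul_of {p q : CosetElt Gi} (a : G) (h : (cosetGeometry Gi).inc p q) :
    (cosetGeometry Gi).inc (rmul Gi a p) (rmul Gi a q) := by
  obtain ⟨z, h1, h2⟩ := h
  exact ⟨z * a, ⟨z, h1, rfl⟩, ⟨z, h2, rfl⟩⟩

lemma inc_rmul_iff (a : G) (p q : CosetElt Gi) :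
    (cosetGeometry Gi).inc (rmul Gi a p) (rmul Gi a q) ↔ (cosetGeometry Gi).inc p q := by
  constructor
  · intro h
    have := inc_rmul_of Gi a⁻¹ h
    rwa [rmul_cancel, rmul_cancel] at this
  · exact inc_rmul_of Gi a

lemma rcoset_eq_iff (H : Subgroup G) (a : G) : rcoset H a = rcoset H 1 ↔ a ∈ H := by
  constructor
  · intro h
    have := mem_rcoset_self H a
    rw [h] at this
    simpa [rcoset] using this
  · intro h
    apply rcoset_eq_of_mem
    simpa [rcoset] using h

lemma rmul_xe (a : G) (i : Fin r) :
    rmul Gi a (xe Gi i) = ⟨(i, rcoset (Gi i) a), ⟨a, rfl⟩⟩ := by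
  apply Subtype.ext
  dsimp [rmul, xe]
  rw [Prod.mk.injEq]
  exact ⟨rfl, by rw [rcoset_image_mul, one_mul]⟩

lemma rmul_xe_eq_iff (a : G) (i : Fin r) :
    rmul Gi a (xe Gi i) = xe Gi i ↔ a ∈ Gi i := by
  rw [rmul_xe, ← rcoset_eq_iff]
  constructor
  · intro h
    exact congrArg (fun p => p.1.2) h
  · intro h
    apply Subtype.ext
    dsimp [xe]
    rw [Prod.mk.injEq]
    exact ⟨rfl, h⟩

lemma inc_xe (i j : Fin r) : (cosetGeometry Gi).inc (xe Gi i) (xe Gi j) := by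
  refine ⟨1, ?_, ?_⟩ <;> simp [xe, rcoset, Subgroup.one_mem]

lemma xe_ne_of_typ_ne {i : Fin r} {p : CosetElt Gi} (h : (cosetGeometry Gi).typ p ≠ i) :
    p ≠ xe Gi i := fun he => h (by rw [he]; rfl)

lemma flag_xe_image (s : Set (Fin r)) : (cosetGeometry Gi).IsFlag (xe Gi '' s) := by
  rintro x ⟨i, _, rfl⟩ y ⟨j, _, rfl⟩
  exact inc_xe Gi i j

lemma typ_image_xe (s : Set (Fin r)) :
    (cosetGeometry Gi).typ '' (xe Gi '' s) = s := by
  rw [Set.image_image]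
  simp [typ_xe]

lemma xe_mem_image_iff {s : Set (Fin r)} {i : Fin r} : xe Gi i ∈ xe Gi '' s ↔ i ∈ s := by
  constructor
  · rintro ⟨j, hj, he⟩
    have : j = i := congrArg (cosetGeometry Gi).typ he
    rwa [← this]
  · exact fun h => ⟨i, h, rfl⟩

lemma typ_notin_of_mem_res {F : Set (CosetElt Gi)} (hF : (cosetGeometry Gi).IsFlag F)
    {z : CosetElt Gi} (hz : z ∈ (cosetGeometry Gi).res F) :
    (cosetGeometry Gi).typ z ∉ (cosetGeometry Gi).typ '' F := by
  rintro ⟨f, hf, hfe⟩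
  exact hz.1 (((cosetGeometry Gi).eq_of_inc_of_typ_eq z f (hz.2 f hf) hfe.symm) ▸ hf)

lemma chamber_base : (cosetGeometry Gi).IsChamber (Set.range (xe Gi)) := by
  constructor
  · rintro x ⟨i, rfl⟩ y ⟨j, rfl⟩
    exact inc_xe Gi i j
  · apply Set.eq_univ_iff_forall.2
    intro j
    exact ⟨xe Gi j, ⟨j, rfl⟩, rfl⟩

lemma eq_one_of_fix (hfree : GFree Gi) {a : G}
    (h : ∀ i, rmul Gi a (xe Gi i) = xe Gi i) : a = 1 := by
  apply hfree a _ (chamber_base Gi)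
  rw [← Set.range_comp]
  exact congrArg Set.range (funext h)

end HT
namespace HT

variable {G : Type*} [Group G] {r : ℕ} (Gi : Fin r → Subgroup G)

lemma exists_rho (hthin : (cosetGeometry Gi).Thin) (hft : GFlagTransitive Gi)
    (hfree : GFree Gi) (i : Fin r) :
    ∃ a : G, (∀ j, j ≠ i → a ∈ Gi j) ∧ rmul Gi a (xe Gi i) ≠ xe Gi i ∧ a * a = 1 ∧
      ∀ b : G, (∀ j, j ≠ i → b ∈ Gi j) → b = 1 ∨ b = a := by
  set Γ := cosetGeometry Gi with hΓ
  set F : Set (CosetElt Gi) := xe Gi '' ({i}ᶜ) with hFdef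
  have flagF : Γ.IsFlag F := flag_xe_image Gi _
  have htypF : Γ.typ '' F = {i}ᶜ := typ_image_xe Gi _
  have hone : ∃! k : Fin r, k ∉ Γ.typ '' F := by
    rw [htypF]
    exact ⟨i, by simp, fun k hk => by simpa using hk⟩
  obtain ⟨u, v, huv, hres⟩ := hthin F flagF hone
  have memres : ∀ z : CosetElt Gi, Γ.typ z = i → (∀ j, j ≠ i → Γ.inc z (xe Gi j)) →
      z ∈ Γ.res F := by
    intro z hz hinc
    constructor
    · rintro ⟨j, hj, rfl⟩
      simp only [Set.mem_compl_iff, Set.mem_singleton_iff] at hj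
      exact hj hz
    · rintro f ⟨j, hj, rfl⟩
      exact hinc j (by simpa using hj)
  have hxi : xe Gi i ∈ Γ.res F := memres (xe Gi i) rfl (fun j _ => inc_xe Gi i j)
  have hex : ∃ y, Γ.res F = {xe Gi i, y} ∧ y ≠ xe Gi i := by
    rw [hres] at hxi
    rcases hxi with h | h
    · exact ⟨v, by rw [hres, ← h], fun e => huv (by rw [← h, e])⟩
    · simp only [Set.mem_singleton_iff] at h
      exact ⟨u, by rw [hres, ← h, Set.pair_comm], fun e => huv (e.trans h)⟩
  obtain ⟨y, hresy, hyne⟩ := hex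
  have hy : y ∈ Γ.res F := by rw [hresy]; right; rfl
  have htypy : Γ.typ y = i := by
    have := typ_notin_of_mem_res Gi flagF hy
    rw [htypF] at this
    simpa using this
  have flagC' : Γ.IsFlag (insert y F) := by
    intro p hp q hq
    rcases hp with rfl | hp <;> rcases hq with rfl | hq
    · exact Γ.inc_refl _
    · exact hy.2 _ hq
    · exact Γ.inc_symm _ _ (hy.2 _ hp)
    · exact flagF _ hp _ hq
  have chamC' : Γ.IsChamber (insert y F) := by
    refine ⟨flagC', ?_⟩
    rw [Set.image_insert_eq, htypF, htypy]
    ext k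
    by_cases hk : k = i <;> simp [hk]
  obtain ⟨a, ha⟩ := hft (Set.range (xe Gi)) (insert y F) (chamber_base Gi).1 flagC'
      (by rw [(chamber_base Gi).2, chamC'.2])
  have hmem : ∀ k, rmul Gi a (xe Gi k) ∈ insert y F := by
    intro k
    rw [← ha]
    exact ⟨xe Gi k, ⟨k, rfl⟩, rfl⟩
  have hfix : ∀ j, j ≠ i → rmul Gi a (xe Gi j) = xe Gi j := by
    intro j hj
    rcases hmem j with he | ⟨k, _, he⟩
    · exact absurd ((congrArg Γ.typ he).trans htypy) hj
    · have hk : k = j := congrArg Γ.typ he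
      rw [← he, hk]
  have haG : ∀ j, j ≠ i → a ∈ Gi j := fun j hj => (rmul_xe_eq_iff Gi a j).1 (hfix j hj)
  have hay : rmul Gi a (xe Gi i) = y := by
    rcases hmem i with he | ⟨k, hk, he⟩
    · exact he
    · exfalso
      have hki : k = i := congrArg Γ.typ he
      simp only [Set.mem_compl_iff, Set.mem_singleton_iff] at hk
      exact hk hki
  have hane : rmul Gi a (xe Gi i) ≠ xe Gi i := by rw [hay]; exact hyne
  have hmemres : ∀ b : G, (∀ j, j ≠ i → b ∈ Gi j) →
      rmul Gi b (xe Gi i) = xe Gi i ∨ rmul Gi b (xe Gi i) = y := by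
    intro b hb
    have hz : rmul Gi b (xe Gi i) ∈ Γ.res F := by
      apply memres (rmul Gi b (xe Gi i)) rfl
      intro j hj
      have hxj : xe Gi j = rmul Gi b (xe Gi j) := ((rmul_xe_eq_iff Gi b j).2 (hb j hj)).symm
      rw [hxj]
      exact inc_rmul_of Gi b (inc_xe Gi i j)
    rw [hresy] at hz
    simpa using hz
  have hray2 : rmul Gi a y = xe Gi i := by
    have hray : rmul Gi a y ∈ Γ.res F := by
      apply memres _ ((typ_rmul Gi a y).trans htypy)
      intro j hj
      have hxj : xe Gi j = rmul Gi a (xe Gi j) := ((rmul_xe_eq_iff Gi a j).2 (haG j hj)).symm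
      rw [hxj]
      exact inc_rmul_of Gi a (hy.2 _ ⟨j, by simpa using hj, rfl⟩)
    rw [hresy] at hray
    simp only [Set.mem_insert_iff, Set.mem_singleton_iff] at hray
    rcases hray with h | h
    · exact h
    · exfalso
      have ha1 : a = 1 := by
        apply hfree a _ chamC'
        rw [Set.image_insert_eq, h]
        congr 1
        rw [hFdef, Set.image_image]
        exact Set.image_congr (fun j hj => hfix j (by simpa using hj))
      exact hane (by rw [ha1, rmul_one])
  have haa : a * a = 1 := by
    apply eq_one_of_fix Gi hfree
    intro k
    by_cases hk : k = i
    · subst hk; rw [rmul_mul, hay, hray2]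
    · rw [rmul_mul, hfix k hk, hfix k hk]
  refine ⟨a, haG, hane, haa, ?_⟩
  intro b hb
  rcases hmemres b hb with h | h
  · left
    apply eq_one_of_fix Gi hfree
    intro k
    by_cases hk : k = i
    · subst hk; exact h
    · exact (rmul_xe_eq_iff Gi b k).2 (hb k hk)
  · right
    have hba : b * a = 1 := by
      apply eq_one_of_fix Gi hfree
      intro k
      by_cases hk : k = i
      · subst hk; rw [rmul_mul, h, hray2]
      · rw [rmul_mul, (rmul_xe_eq_iff Gi b k).2 (hb k hk), hfix k hk]
    exact (eq_inv_of_mul_eq_one_left hba).trans (inv_eq_of_mul_eq_one_right haa)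

end HT
namespace HT

variable {G : Type*} [Group G] {r : ℕ} (Gi : Fin r → Subgroup G)

lemma mem_biInf_iff (S : Set (Fin r)) (a : G) :
    a ∈ (⨅ j ∈ S, Gi j) ↔ ∀ j ∈ S, a ∈ Gi j := by
  simp [Subgroup.mem_iInf]

lemma compl_diff_singleton {K : Set (Fin r)} {t j : Fin r} (hj : j ∈ (K \ {t})ᶜ) :
    j ∈ Kᶜ ∨ j = t := by
  simp only [Set.mem_compl_iff, Set.mem_diff, Set.mem_singleton_iff, not_and, not_not] at hj
  by_cases hjK : j ∈ K
  · exact Or.inr (hj hjK)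
  · exact Or.inl hjK

lemma parabolic (hrc : (cosetGeometry Gi).ResiduallyConnected) (hft : GFlagTransitive Gi)
    (hfree : GFree Gi) (ρ : Fin r → G)
    (h1 : ∀ i j, j ≠ i → ρ i ∈ Gi j)
    (h4 : ∀ (i : Fin r) (b : G), (∀ j, j ≠ i → b ∈ Gi j) → b = 1 ∨ b = ρ i) :
    ∀ (n : ℕ) (K : Set (Fin r)), K.ncard ≤ n →
      (⨅ j ∈ Kᶜ, Gi j) = Subgroup.closure (ρ '' K) := by
  intro n
  induction n with
  | zero =>
    intro K hK
    have hKe : K = ∅ := (Set.ncard_eq_zero (Set.toFinite K)).1 (Nat.le_zero.1 hK)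
    subst hKe
    rw [Set.image_empty, Subgroup.closure_empty]
    apply le_antisymm ?_ bot_le
    intro a haa
    rw [mem_biInf_iff] at haa
    have ha1 : a = 1 :=
      eq_one_of_fix Gi hfree (fun k => (rmul_xe_eq_iff Gi a k).2 (haa k (by simp)))
    simp [ha1]
  | succ n ih =>
    intro K hK
    have hle : Subgroup.closure (ρ '' K) ≤ ⨅ j ∈ Kᶜ, Gi j := by
      rw [Subgroup.closure_le]
      rintro g ⟨i, hi, rfl⟩
      rw [SetLike.mem_coe, mem_biInf_iff]
      intro j hj
      exact h1 i j (fun e => hj (e ▸ hi))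
    rcases Set.eq_empty_or_nonempty K with rfl | hKne
    · exact ih ∅ (by simp)
    rcases Set.subsingleton_or_nontrivial K with hsub | hnt
    · -- singleton case
      rcases hsub.eq_empty_or_singleton with rfl | ⟨i, rfl⟩
      · exact ih ∅ (by simp)
      apply le_antisymm ?_ hle
      intro b hb
      rw [mem_biInf_iff] at hb
      rcases h4 i b (fun j hj => hb j (by simpa using hj)) with rfl | rfl
      · exact Subgroup.one_mem _
      · exact Subgroup.subset_closure ⟨i, rfl, rfl⟩
    -- main case : K has two distinct elements
    obtain ⟨i, hiK, i', hi'K, hii'⟩ := hnt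
    set F : Set (CosetElt Gi) := xe Gi '' Kᶜ with hFdef
    have flagF : (cosetGeometry Gi).IsFlag F := flag_xe_image Gi _
    have htypF : (cosetGeometry Gi).typ '' F = Kᶜ := typ_image_xe Gi _
    have memres : ∀ z : CosetElt Gi, (cosetGeometry Gi).typ z ∈ K →
        (∀ j ∈ Kᶜ, (cosetGeometry Gi).inc z (xe Gi j)) → z ∈ (cosetGeometry Gi).res F := by
      intro z hz hinc
      constructor
      · rintro ⟨j, hj, rfl⟩
        exact hj hz
      · rintro f ⟨j, hj, rfl⟩
        exact hinc j hj
    have typK : ∀ z ∈ (cosetGeometry Gi).res F, (cosetGeometry Gi).typ z ∈ K := by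
      intro z hz
      have := typ_notin_of_mem_res Gi flagF hz
      rw [htypF] at this
      simpa using this
    have hxeres : ∀ k ∈ K, xe Gi k ∈ (cosetGeometry Gi).res F := fun k hk =>
      memres (xe Gi k) hk (fun j _ => inc_xe Gi k j)
    have hconn := hrc F flagF ⟨i, i', hii', by rw [htypF]; simpa using hiK,
      by rw [htypF]; simpa using hi'K⟩
    -- the gallery claim
    have key : ∀ z ∈ (cosetGeometry Gi).res F, ∃ h ∈ Subgroup.closure (ρ '' K),
        rmul Gi h (xe Gi ((cosetGeometry Gi).typ z)) = z := by
      intro z hz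
      have hpath := hconn.2 (xe Gi i) (hxeres i hiK) z hz
      clear hz
      induction hpath with
      | refl => exact ⟨1, Subgroup.one_mem _, rmul_one Gi _⟩
      | tail hab hbc ihp =>
        rename_i b c
        obtain ⟨hbres, hcres, hbc_ne, hbc_inc⟩ := hbc
        obtain ⟨h, hhW, hhb⟩ := ihp
        have htaK : (cosetGeometry Gi).typ b ∈ K := typK _ hbres
        have htcK : (cosetGeometry Gi).typ c ∈ K := typK _ hcres
        have hne : (cosetGeometry Gi).typ b ≠ (cosetGeometry Gi).typ c := fun e =>
          hbc_ne ((cosetGeometry Gi).eq_of_inc_of_typ_eq b c hbc_inc e)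
        have hhinf : h ∈ ⨅ j ∈ Kᶜ, Gi j := hle hhW
        set c' := rmul Gi h⁻¹ c with hc'def
        have hfixh : ∀ j ∈ Kᶜ, rmul Gi h⁻¹ (xe Gi j) = xe Gi j := fun j hj =>
          (rmul_xe_eq_iff Gi h⁻¹ j).2 ((Gi j).inv_mem ((mem_biInf_iff Gi Kᶜ h).1 hhinf j hj))
        have hc'res : c' ∈ (cosetGeometry Gi).res F := by
          apply memres c' htcK
          intro j hj
          rw [← hfixh j hj]
          exact inc_rmul_of Gi h⁻¹ (hcres.2 _ ⟨j, hj, rfl⟩)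
        have hincb : (cosetGeometry Gi).inc (xe Gi ((cosetGeometry Gi).typ b)) c' := by
          have hxb : xe Gi ((cosetGeometry Gi).typ b) = rmul Gi h⁻¹ b := by
            rw [← hhb, rmul_cancel]
            exact rfl
          rw [hxb]
          exact inc_rmul_of Gi h⁻¹ hbc_inc
        set xb := xe Gi ((cosetGeometry Gi).typ b) with hxbdef
        set xc := xe Gi ((cosetGeometry Gi).typ c) with hxcdef
        have flagA : (cosetGeometry Gi).IsFlag (insert xc (insert xb F)) := by
          rintro p hp q hq
          rcases hp with rfl | rfl | ⟨jp, _, rfl⟩ <;> rcases hq with rfl | rfl | ⟨jq, _, rfl⟩ <;>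
            first
              | exact inc_xe Gi _ _
              | exact (cosetGeometry Gi).inc_refl _
        have flagB : (cosetGeometry Gi).IsFlag (insert c' (insert xb F)) := by
          rintro p hp q hq
          rcases hp with rfl | rfl | hp <;> rcases hq with rfl | rfl | hq
          · exact (cosetGeometry Gi).inc_refl _
          · exact (cosetGeometry Gi).inc_symm _ _ hincb
          · exact hc'res.2 _ hq
          · exact hincb
          · exact (cosetGeometry Gi).inc_refl _
          · obtain ⟨jq, _, rfl⟩ := hq
            exact inc_xe Gi _ _
          · exact (cosetGeometry Gi).inc_symm _ _ (hc'res.2 _ hp)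
          · obtain ⟨jp, _, rfl⟩ := hp
            exact inc_xe Gi _ _
          · exact flagF _ hp _ hq
        have htypAB : (cosetGeometry Gi).typ '' (insert xc (insert xb F)) =
            (cosetGeometry Gi).typ '' (insert c' (insert xb F)) := by
          rw [Set.image_insert_eq, Set.image_insert_eq, Set.image_insert_eq,
            Set.image_insert_eq]
          rfl
        obtain ⟨g, hg⟩ := hft _ _ flagA flagB htypAB
        have hmemg : ∀ p ∈ insert xc (insert xb F), rmul Gi g p ∈ insert c' (insert xb F) := by
          intro p hp
          rw [← hg]
          exact ⟨p, hp, rfl⟩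
        have hgfix : ∀ j ∈ Kᶜ, rmul Gi g (xe Gi j) = xe Gi j := by
          intro j hj
          have hm := hmemg (xe Gi j) (by right; right; exact ⟨j, hj, rfl⟩)
          simp only [Set.mem_insert_iff] at hm
          rcases hm with he | he | ⟨k, hk, he⟩
          · have hjc : j = (cosetGeometry Gi).typ c := congrArg (cosetGeometry Gi).typ he
            rw [hjc] at hj
            exact absurd htcK hj
          · have hjb : j = (cosetGeometry Gi).typ b := congrArg (cosetGeometry Gi).typ he
            rw [hjb] at hj
            exact absurd htaK hj
          · have hk2 : k = j := congrArg (cosetGeometry Gi).typ he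
            rw [← he, hk2]
        have hgta : rmul Gi g xb = xb := by
          have hm := hmemg xb (by right; left; rfl)
          simp only [Set.mem_insert_iff] at hm
          rcases hm with he | he | ⟨k, hk, he⟩
          · exact absurd (congrArg (cosetGeometry Gi).typ he) hne
          · exact he
          · have hk2 : k = (cosetGeometry Gi).typ b := congrArg (cosetGeometry Gi).typ he
            rw [hk2] at hk
            exact absurd htaK hk
        have hgtc : rmul Gi g xc = c' := by
          have hm := hmemg xc (by left; rfl)
          simp only [Set.mem_insert_iff] at hm
          rcases hm with he | he | ⟨k, hk, he⟩
          · exact he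
          · exact absurd (congrArg (cosetGeometry Gi).typ he) hne.symm
          · have hk2 : k = (cosetGeometry Gi).typ c := congrArg (cosetGeometry Gi).typ he
            rw [hk2] at hk
            exact absurd htcK hk
        have hgmem : g ∈ ⨅ j ∈ (K \ {(cosetGeometry Gi).typ b})ᶜ, Gi j := by
          rw [mem_biInf_iff]
          intro j hj
          rcases compl_diff_singleton hj with hj' | rfl
          · exact (rmul_xe_eq_iff Gi g j).1 (hgfix j hj')
          · exact (rmul_xe_eq_iff Gi g _).1 hgta
        have hlt : (K \ {(cosetGeometry Gi).typ b}).ncard ≤ n := by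
          have := Set.ncard_diff_singleton_lt_of_mem htaK (Set.toFinite K)
          omega
        have hgW : g ∈ Subgroup.closure (ρ '' K) := by
          rw [ih _ hlt] at hgmem
          exact Subgroup.closure_mono (Set.image_mono (f := ρ) Set.diff_subset) hgmem
        refine ⟨g * h, Subgroup.mul_mem _ hgW hhW, ?_⟩
        rw [rmul_mul, hgtc, hc'def, ← rmul_mul, inv_mul_cancel, rmul_one]
    -- conclude
    apply le_antisymm ?_ hle
    intro a haa
    have hares : rmul Gi a (xe Gi i) ∈ (cosetGeometry Gi).res F := by
      apply memres (rmul Gi a (xe Gi i)) hiK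
      intro j hj
      rw [← ((rmul_xe_eq_iff Gi a j).2 ((mem_biInf_iff Gi Kᶜ a).1 haa j hj))]
      exact inc_rmul_of Gi a (inc_xe Gi i j)
    obtain ⟨h, hhW, hhe⟩ := key _ hares
    have hcmem : a * h⁻¹ ∈ ⨅ j ∈ (K \ {i})ᶜ, Gi j := by
      rw [mem_biInf_iff]
      intro j hj
      rcases compl_diff_singleton hj with hj' | rfl
      · exact mul_mem ((mem_biInf_iff Gi Kᶜ a).1 haa j hj')
          (inv_mem ((mem_biInf_iff Gi Kᶜ h).1 (hle hhW) j hj'))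
      · apply (rmul_xe_eq_iff Gi (a * h⁻¹) _).1
        rw [rmul_mul, ← hhe, rmul_cancel]
        exact rfl
    have hlt : (K \ {i}).ncard ≤ n := by
      have := Set.ncard_diff_singleton_lt_of_mem hiK (Set.toFinite K)
      omega
    have haW' : a * h⁻¹ ∈ Subgroup.closure (ρ '' K) := by
      rw [ih _ hlt] at hcmem
      exact Subgroup.closure_mono (Set.image_mono (f := ρ) Set.diff_subset) hcmem
    have hfin : a = (a * h⁻¹) * h := by group
    rw [hfin]
    exact Subgroup.mul_mem _ haW' hhW

end HT
namespace HT

variable {G : Type*} [Group G] {r : ℕ} (Gi : Fin r → Subgroup G)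

lemma rho_fix_other (hfree : GFree Gi) (hthin : (cosetGeometry Gi).Thin)
    (hdigon : ∀ i j : Fin r, 1 < Nat.dist i.val j.val →
      ∀ F : Set (CosetElt Gi), (cosetGeometry Gi).IsFlag F →
        (cosetGeometry Gi).typ '' F = ({i, j}ᶜ : Set (Fin r)) →
        ∀ x ∈ (cosetGeometry Gi).res F, ∀ y ∈ (cosetGeometry Gi).res F,
          (cosetGeometry Gi).typ x = i → (cosetGeometry Gi).typ y = j →
          (cosetGeometry Gi).inc x y)
    (ρ : Fin r → G)
    (h1 : ∀ i j, j ≠ i → ρ i ∈ Gi j)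
    (h2 : ∀ i, rmul Gi (ρ i) (xe Gi i) ≠ xe Gi i)
    (h3 : ∀ i, ρ i * ρ i = 1)
    (i j : Fin r) (hd : 1 < Nat.dist i.val j.val) :
    rmul Gi (ρ i) (rmul Gi (ρ j) (xe Gi j)) = rmul Gi (ρ j) (xe Gi j) := by
  have hij : i ≠ j := by
    intro e
    subst e
    simp [Nat.dist_self] at hd
  set F : Set (CosetElt Gi) := xe Gi '' ({i, j}ᶜ) with hFdef
  have flagF := flag_xe_image Gi ({i, j}ᶜ)
  have htypF : (cosetGeometry Gi).typ '' F = ({i, j}ᶜ : Set (Fin r)) := typ_image_xe Gi _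
  have fix1 : ∀ k, k ≠ i → rmul Gi (ρ i) (xe Gi k) = xe Gi k := fun k hk =>
    (rmul_xe_eq_iff Gi _ k).2 (h1 i k hk)
  have fix2 : ∀ k, k ≠ j → rmul Gi (ρ j) (xe Gi k) = xe Gi k := fun k hk =>
    (rmul_xe_eq_iff Gi _ k).2 (h1 j k hk)
  set yi := rmul Gi (ρ i) (xe Gi i) with hyidef
  set yj := rmul Gi (ρ j) (xe Gi j) with hyjdef
  have hnej : yj ≠ xe Gi j := h2 j
  have hyiF : yi ∈ (cosetGeometry Gi).res F := by
    constructor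
    · rintro ⟨k, hk, he⟩
      have hki : k = i := congrArg (cosetGeometry Gi).typ he
      rw [hki] at hk
      exact hk (by left; rfl)
    · rintro f ⟨k, hk, rfl⟩
      have hki : k ≠ i := fun e => hk (by rw [e]; left; rfl)
      rw [← fix1 k hki, hyidef]
      exact inc_rmul_of Gi _ (inc_xe Gi i k)
  have hyjF : yj ∈ (cosetGeometry Gi).res F := by
    constructor
    · rintro ⟨k, hk, he⟩
      have hkj : k = j := congrArg (cosetGeometry Gi).typ he
      rw [hkj] at hk
      exact hk (by right; rfl)
    · rintro f ⟨k, hk, rfl⟩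
      have hkj : k ≠ j := fun e => hk (by rw [e]; right; rfl)
      rw [← fix2 k hkj, hyjdef]
      exact inc_rmul_of Gi _ (inc_xe Gi j k)
  have hxiF : xe Gi i ∈ (cosetGeometry Gi).res F := by
    constructor
    · rintro ⟨k, hk, he⟩
      have hki : k = i := congrArg (cosetGeometry Gi).typ he
      rw [hki] at hk
      exact hk (by left; rfl)
    · rintro f ⟨k, _, rfl⟩
      exact inc_xe Gi i k
  have hxjF : xe Gi j ∈ (cosetGeometry Gi).res F := by
    constructor
    · rintro ⟨k, hk, he⟩
      have hkj : k = j := congrArg (cosetGeometry Gi).typ he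
      rw [hkj] at hk
      exact hk (by right; rfl)
    · rintro f ⟨k, _, rfl⟩
      exact inc_xe Gi j k
  have dij := hdigon i j hd F flagF htypF
  have dji := hdigon j i (by rwa [Nat.dist_comm]) F flagF (by rw [htypF, Set.pair_comm])
  have flagF' : (cosetGeometry Gi).IsFlag (insert yi F) := by
    rintro p hp q hq
    rcases hp with rfl | hp <;> rcases hq with rfl | hq
    · exact (cosetGeometry Gi).inc_refl _
    · exact hyiF.2 _ hq
    · exact (cosetGeometry Gi).inc_symm _ _ (hyiF.2 _ hp)
    · exact flagF _ hp _ hq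
  have hone : ∃! k : Fin r, k ∉ (cosetGeometry Gi).typ '' insert yi F := by
    have htypF' : (cosetGeometry Gi).typ '' insert yi F = insert i ({i, j}ᶜ) := by
      rw [Set.image_insert_eq, htypF]
      rfl
    rw [htypF']
    constructor
    · show j ∉ insert i ({i, j}ᶜ) ∧ _
      constructor
      · simp only [Set.mem_insert_iff, Set.mem_compl_iff, Set.mem_singleton_iff]
        tauto
      · intro k hk
        simp only [Set.mem_insert_iff, Set.mem_compl_iff, Set.mem_singleton_iff] at hk
        tauto
  obtain ⟨u, v, huv, hres⟩ := hthin _ flagF' hone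
  have hxjF' : xe Gi j ∈ (cosetGeometry Gi).res (insert yi F) := by
    constructor
    · rintro (he | ⟨k, hk, he⟩)
      · exact hij (congrArg (cosetGeometry Gi).typ he).symm
      · have hkj : k = j := congrArg (cosetGeometry Gi).typ he
        rw [hkj] at hk
        exact hk (by right; rfl)
    · rintro f (rfl | hf)
      · exact (cosetGeometry Gi).inc_symm _ _ (dij yi hyiF (xe Gi j) hxjF rfl rfl)
      · obtain ⟨k, _, rfl⟩ := hf
        exact inc_xe Gi j k
  have hyjF' : yj ∈ (cosetGeometry Gi).res (insert yi F) := by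
    constructor
    · rintro (he | ⟨k, hk, he⟩)
      · exact hij (congrArg (cosetGeometry Gi).typ he).symm
      · have hkj : k = j := congrArg (cosetGeometry Gi).typ he
        rw [hkj] at hk
        exact hk (by right; rfl)
    · rintro f (rfl | hf)
      · exact (cosetGeometry Gi).inc_symm _ _ (dij yi hyiF yj hyjF rfl rfl)
      · obtain ⟨k, hk, rfl⟩ := hf
        exact hyjF.2 _ ⟨k, hk, rfl⟩
  have hzF' : rmul Gi (ρ i) yj ∈ (cosetGeometry Gi).res (insert yi F) := by
    constructor
    · rintro (he | ⟨k, hk, he⟩)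
      · exact hij (congrArg (cosetGeometry Gi).typ he).symm
      · have hkj : k = j := congrArg (cosetGeometry Gi).typ he
        rw [hkj] at hk
        exact hk (by right; rfl)
    · rintro f (rfl | hf)
      · rw [hyidef]
        exact inc_rmul_of Gi (ρ i) (dji yj hyjF (xe Gi i) hxiF rfl rfl)
      · obtain ⟨k, hk, rfl⟩ := hf
        have hki : k ≠ i := fun e => hk (by rw [e]; left; rfl)
        rw [← fix1 k hki]
        exact inc_rmul_of Gi (ρ i) (hyjF.2 _ ⟨k, hk, rfl⟩)
  have hpair : rmul Gi (ρ i) yj = xe Gi j ∨ rmul Gi (ρ i) yj = yj := by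
    rw [hres] at hzF' hxjF' hyjF'
    simp only [Set.mem_insert_iff, Set.mem_singleton_iff] at hzF' hxjF' hyjF'
    rcases hxjF' with h1' | h1' <;> rcases hyjF' with h2' | h2' <;> rcases hzF' with h3' | h3' <;>
      first
        | exact Or.inl (h3'.trans h1'.symm)
        | exact Or.inr (h3'.trans h2'.symm)
        | exact absurd (h2'.trans h1'.symm) hnej
  rcases hpair with he | he
  · exfalso
    have hcc := congrArg (rmul Gi (ρ i)) he
    rw [← rmul_mul, h3 i, rmul_one] at hcc
    rw [fix1 j (Ne.symm hij)] at hcc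
    exact hnej hcc
  · exact he

lemma string_cond (hfree : GFree Gi) (hthin : (cosetGeometry Gi).Thin)
    (hdigon : ∀ i j : Fin r, 1 < Nat.dist i.val j.val →
      ∀ F : Set (CosetElt Gi), (cosetGeometry Gi).IsFlag F →
        (cosetGeometry Gi).typ '' F = ({i, j}ᶜ : Set (Fin r)) →
        ∀ x ∈ (cosetGeometry Gi).res F, ∀ y ∈ (cosetGeometry Gi).res F,
          (cosetGeometry Gi).typ x = i → (cosetGeometry Gi).typ y = j →
          (cosetGeometry Gi).inc x y)
    (ρ : Fin r → G)
    (h1 : ∀ i j, j ≠ i → ρ i ∈ Gi j)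
    (h2 : ∀ i, rmul Gi (ρ i) (xe Gi i) ≠ xe Gi i)
    (h3 : ∀ i, ρ i * ρ i = 1)
    (i j : Fin r) (hd : 1 < Nat.dist i.val j.val) :
    (ρ i * ρ j) * (ρ i * ρ j) = 1 := by
  have hij : i ≠ j := by
    intro e
    subst e
    simp [Nat.dist_self] at hd
  have k1 := rho_fix_other Gi hfree hthin hdigon ρ h1 h2 h3 i j hd
  have k2 := rho_fix_other Gi hfree hthin hdigon ρ h1 h2 h3 j i (by rwa [Nat.dist_comm])
  have e1 : rmul Gi (ρ i) (rmul Gi (ρ i) (xe Gi i)) = xe Gi i := by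
    rw [← rmul_mul, h3 i, rmul_one]
  have e2 : rmul Gi (ρ j) (rmul Gi (ρ j) (xe Gi j)) = xe Gi j := by
    rw [← rmul_mul, h3 j, rmul_one]
  apply eq_one_of_fix Gi hfree
  intro k
  simp only [rmul_mul]
  by_cases hk1 : k = i
  · subst hk1
    rw [k2, e1]
    exact (rmul_xe_eq_iff Gi _ k).2 (h1 j k hij)
  by_cases hk2 : k = j
  · subst hk2
    rw [(rmul_xe_eq_iff Gi (ρ i) k).2 (h1 i k (Ne.symm hij)), k1, e2]
  · rw [(rmul_xe_eq_iff Gi (ρ i) k).2 (h1 i k hk1),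
      (rmul_xe_eq_iff Gi (ρ j) k).2 (h1 j k hk2),
      (rmul_xe_eq_iff Gi (ρ i) k).2 (h1 i k hk1),
      (rmul_xe_eq_iff Gi (ρ j) k).2 (h1 j k hk2)]

end HT
/-- Theorem 5.2: a regular hypertope with a string diagram yields a string C-group. -/
theorem stmt_5 {G : Type*} [Group G] {r : ℕ} (Gi : Fin r → Subgroup G)
    (hgeo : (cosetGeometry Gi).IsGeometry)
    (hthin : (cosetGeometry Gi).Thin)
    (hrc : (cosetGeometry Gi).ResiduallyConnected)
    (hft : GFlagTransitive Gi)
    (hfree : GFree Gi)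
    (hdigon : ∀ i j : Fin r, 1 < Nat.dist i.val j.val →
      ∀ F : Set (CosetElt Gi), (cosetGeometry Gi).IsFlag F →
        (cosetGeometry Gi).typ '' F = ({i, j}ᶜ : Set (Fin r)) →
        ∀ x ∈ (cosetGeometry Gi).res F, ∀ y ∈ (cosetGeometry Gi).res F,
          (cosetGeometry Gi).typ x = i → (cosetGeometry Gi).typ y = j →
          (cosetGeometry Gi).inc x y) :
    ∃ ρ : Fin r → G,
      (∀ i : Fin r, (⨅ j ∈ ({i}ᶜ : Set (Fin r)), Gi j) = Subgroup.closure {ρ i}) ∧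
      (∀ i, ρ i ≠ 1 ∧ ρ i * ρ i = 1) ∧
      Subgroup.closure (Set.range ρ) = ⊤ ∧
      (∀ K J : Set (Fin r),
        Subgroup.closure (ρ '' K) ⊓ Subgroup.closure (ρ '' J) =
          Subgroup.closure (ρ '' (K ∩ J))) ∧
      (∀ i j : Fin r, 1 < Nat.dist i.val j.val → (ρ i * ρ j) * (ρ i * ρ j) = 1) := by
  choose ρ h1 h2 h3 h4 using fun i => HT.exists_rho Gi hthin hft hfree i
  have hpara := HT.parabolic Gi hrc hft hfree ρ h1 h4
  refine ⟨ρ, ?_, ?_, ?_, ?_, ?_⟩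
  · intro i
    have h := hpara 1 {i} (by simp)
    rw [Set.image_singleton] at h
    exact h
  · intro i
    refine ⟨?_, h3 i⟩
    intro e
    exact h2 i (by rw [e, HT.rmul_one])
  · have h := hpara (Set.univ.ncard) Set.univ le_rfl
    rw [Set.image_univ] at h
    rw [← h, Set.compl_univ]
    simp
  · intro K J
    rw [← hpara K.ncard K le_rfl, ← hpara J.ncard J le_rfl,
      ← hpara (K ∩ J).ncard (K ∩ J) le_rfl, Set.compl_inter, iInf_union]
  · exact fun i j hd => HT.string_cond Gi hfree hthin hdigon ρ h1 h2 h3 i j hd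
end

section
/- Let (G, S) be a C-group of rank r with S = {ρ_0,...,ρ_{r−1}} and let (G⁺, R) be its rotation subgroup, where R = {α_j = ρ_0ρ_j : j = 1,...,r−1} and G⁺ = ⟨R⟩. If G⁺ has index 2 in G, then (G⁺, R) is a C⁺-group: setting α_0 = 1 and G⁺_K = ⟨α_i^{-1}α_j : i, j ∈ K⟩ for K ⊆ {0,...,r−1}, one has G⁺_K ∩ G⁺_J = G⁺_{K∩J} for all K, J ⊆ {0,...,r−1} with |K|, |J| ≥ 2. -/
open Pointwise

/-- Proposition 6.2: the rotation subgroup of a C-group is a C⁺-group when it has index 2. -/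
theorem stmt_17 {G : Type*} [Group G] {r : ℕ} [NeZero r] (ρ : Fin r → G)
    (hCgrp : IsCGroup ρ)
    (hidx : (Subgroup.closure {g : G | ∃ j : Fin r, j ≠ 0 ∧ g = ρ 0 * ρ j}).index = 2) :
    ∀ K J : Set (Fin r), K.Nontrivial → J.Nontrivial →
      GplusSub (fun i : Fin r => ρ 0 * ρ i) K ⊓ GplusSub (fun i : Fin r => ρ 0 * ρ i) J =
        GplusSub (fun i : Fin r => ρ 0 * ρ i) (K ∩ J) := by
    classical
  obtain ⟨hinv, hgen, hIP⟩ := hCgrp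
  set α : Fin r → G := fun i : Fin r => ρ 0 * ρ i with hα
  set H : Subgroup G := Subgroup.closure {g : G | ∃ j : Fin r, j ≠ 0 ∧ g = ρ 0 * ρ j} with hH
  have hρinv : ∀ i, (ρ i)⁻¹ = ρ i := fun i => by
    rw [inv_eq_iff_mul_eq_one]; exact (hinv i).2
  have hαα : ∀ i j, (α i)⁻¹ * α j = ρ i * ρ j := by
    intro i j
    show (ρ 0 * ρ i)⁻¹ * (ρ 0 * ρ j) = ρ i * ρ j
    rw [mul_inv_rev, hρinv i]
    group
  have hgenM : ∀ (M : Set (Fin r)) (i j : Fin r), i ∈ M → j ∈ M →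
      ρ i * ρ j ∈ GplusSub α M := by
    intro M i j hi hj
    exact Subgroup.subset_closure ⟨i, hi, j, hj, (hαα i j).symm⟩
  have hαH : ∀ i, α i ∈ H := by
    intro i
    by_cases h0 : i = 0
    · subst h0
      have h1 : α 0 = 1 := (hinv 0).2
      rw [h1]; exact H.one_mem
    · exact Subgroup.subset_closure ⟨i, h0, rfl⟩
  have hsubH : ∀ M : Set (Fin r), GplusSub α M ≤ H := by
    intro M
    apply (Subgroup.closure_le H).2
    rintro g ⟨i, _, j, _, rfl⟩
    exact H.mul_mem (H.inv_mem (hαH i)) (hαH j)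
  have hsubW : ∀ M : Set (Fin r), GplusSub α M ≤ Subgroup.closure (ρ '' M) := by
    intro M
    apply (Subgroup.closure_le _).2
    rintro g ⟨i, hi, j, hj, rfl⟩
    rw [hαα]
    exact Subgroup.mul_mem _ (Subgroup.subset_closure ⟨i, hi, rfl⟩)
      (Subgroup.subset_closure ⟨j, hj, rfl⟩)
  have hρnotH : ∀ m : Fin r, ρ m ∉ H := by
    intro m hm
    have h0 : ρ 0 ∈ H := by
      by_cases h : m = 0
      · rwa [h] at hm
      · have h1 : ρ 0 * ρ m ∈ H := Subgroup.subset_closure ⟨m, h, rfl⟩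
        have h2 : ρ 0 = (ρ 0 * ρ m) * (ρ m)⁻¹ := by group
        rw [h2]
        exact H.mul_mem h1 (H.inv_mem hm)
    have hall : ∀ j : Fin r, ρ j ∈ H := by
      intro j
      by_cases h : j = 0
      · rwa [h]
      · have h1 : ρ 0 * ρ j ∈ H := Subgroup.subset_closure ⟨j, h, rfl⟩
        have h2 : ρ j = (ρ 0)⁻¹ * (ρ 0 * ρ j) := by group
        rw [h2]
        exact H.mul_mem (H.inv_mem h0) h1
    have htop : H = ⊤ := by
      rw [eq_top_iff, ← hgen]
      apply (Subgroup.closure_le H).2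
      rintro g ⟨j, rfl⟩
      exact hall j
    rw [htop, Subgroup.index_top] at hidx
    exact absurd hidx (by norm_num)
  have hsq : ∀ m : Fin r, ρ m * ρ m = 1 := fun m => (hinv m).2
  have hnorm : ∀ (M : Set (Fin r)) (m : Fin r), m ∈ M → ∀ x ∈ GplusSub α M,
      ρ m * x * ρ m ∈ GplusSub α M := by
    intro M m hm x hx
    induction hx using Subgroup.closure_induction with
    | mem g hg =>
        obtain ⟨i, hi, j, hj, rfl⟩ := hg
        rw [hαα]
        have h2 : ρ m * (ρ i * ρ j) * ρ m = (ρ m * ρ i) * (ρ j * ρ m) := by group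
        rw [h2]
        exact Subgroup.mul_mem _ (hgenM M m i hm hi) (hgenM M j m hj hm)
    | one =>
        have h2 : ρ m * 1 * ρ m = ρ m * ρ m := by group
        rw [h2, hsq m]
        exact Subgroup.one_mem _
    | mul a b _ _ ha hb =>
        have h2 : ρ m * (a * b) * ρ m = (ρ m * a * ρ m) * (ρ m * b * ρ m) := by
          calc ρ m * (a * b) * ρ m = ρ m * a * (ρ m * ρ m) * b * ρ m := by
                rw [hsq m]; group
            _ = (ρ m * a * ρ m) * (ρ m * b * ρ m) := by group
        rw [h2]
        exact Subgroup.mul_mem _ ha hb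
    | inv a _ ha =>
        have h2 : ρ m * a⁻¹ * ρ m = (ρ m * a * ρ m)⁻¹ := by
          rw [mul_inv_rev, mul_inv_rev, hρinv m]
          group
        rw [h2]
        exact Subgroup.inv_mem _ ha
  have hconj : ∀ (M : Set (Fin r)) (m : Fin r), m ∈ M → ∀ a : G,
      ρ m * a ∈ GplusSub α M → a * ρ m ∈ GplusSub α M := by
    intro M m hm a ha
    have h2 : ρ m * (ρ m * a) * ρ m = a * ρ m := by
      rw [← mul_assoc, hsq m, one_mul]
    rw [← h2]
    exact hnorm M m hm _ ha
  have hdich : ∀ (M : Set (Fin r)) (m : Fin r), m ∈ M →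
      ∀ w ∈ Subgroup.closure (ρ '' M),
        w ∈ GplusSub α M ∨ ρ m * w ∈ GplusSub α M := by
    intro M m hm w hw
    induction hw using Subgroup.closure_induction with
    | mem g hg =>
        obtain ⟨i, hi, rfl⟩ := hg
        exact Or.inr (hgenM M m i hm hi)
    | one => exact Or.inl (Subgroup.one_mem _)
    | mul a b _ _ ha hb =>
        rcases ha with ha | ha <;> rcases hb with hb | hb
        · exact Or.inl (Subgroup.mul_mem _ ha hb)
        · refine Or.inr ?_
          have h2 : (ρ m * a * ρ m) * (ρ m * b) = ρ m * (a * b) := by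
            calc (ρ m * a * ρ m) * (ρ m * b) = ρ m * a * (ρ m * ρ m) * b := by group
              _ = ρ m * (a * b) := by rw [hsq m]; group
          rw [← h2]
          exact Subgroup.mul_mem _ (hnorm M m hm a ha) hb
        · refine Or.inr ?_
          have h2 : ρ m * (a * b) = (ρ m * a) * b := by group
          rw [h2]
          exact Subgroup.mul_mem _ ha hb
        · refine Or.inl ?_
          have h2 : a * b = (a * ρ m) * (ρ m * b) := by
            calc a * b = a * (ρ m * ρ m) * b := by rw [hsq m]; group
              _ = (a * ρ m) * (ρ m * b) := by group
          rw [h2]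
          exact Subgroup.mul_mem _ (hconj M m hm a ha) hb
    | inv a _ ha =>
        rcases ha with ha | ha
        · exact Or.inl (Subgroup.inv_mem _ ha)
        · refine Or.inr ?_
          have h2 : ρ m * a⁻¹ = (a * ρ m)⁻¹ := by
            rw [mul_inv_rev, hρinv m]
          rw [h2]
          exact Subgroup.inv_mem _ (hconj M m hm a ha)
  intro K J _ _
  apply le_antisymm
  · rintro x ⟨hxK, hxJ⟩
    have hxW : x ∈ Subgroup.closure (ρ '' (K ∩ J)) := by
      rw [← hIP K J]
      exact ⟨hsubW K hxK, hsubW J hxJ⟩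
    rcases Set.eq_empty_or_nonempty (K ∩ J) with he | ⟨m, hm⟩
    · rw [he, Set.image_empty, Subgroup.closure_empty, Subgroup.mem_bot] at hxW
      rw [hxW]
      exact Subgroup.one_mem _
    · rcases hdich (K ∩ J) m hm x hxW with h | h
      · exact h
      · exfalso
        apply hρnotH m
        have hxH : x ∈ H := hsubH K hxK
        have h2 : ρ m = (ρ m * x) * x⁻¹ := by group
        rw [h2]
        exact H.mul_mem (hsubH _ h) (H.inv_mem hxH)
  · have hmono : ∀ M N : Set (Fin r), M ⊆ N → GplusSub α M ≤ GplusSub α N := by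
      intro M N hMN
      apply Subgroup.closure_mono
      rintro g ⟨i, hi, j, hj, rfl⟩
      exact ⟨i, hMN hi, j, hMN hj, rfl⟩
    exact le_inf (hmono _ _ Set.inter_subset_left) (hmono _ _ Set.inter_subset_right)
end
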